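/- arXiv:1804.05933 — 4 statements merged into one kernel-verified Lean document; each statement's English description precedes it below -/
import Mathlib

section
/- The product of two symmetric and unimodal polynomials with nonnegative coefficients, of darga m and m' respectively, is symmetric and unimodal of darga m+m'. -/
open Polynomial Finset

/-- `p` is symmetric of darga `m`: the coefficient of `q^k` equals the coefficient of
`q^(m-k)`, and no coefficients above degree `m`. -/
def IsSymmOfDarga (p : Polynomial ℝ) (m : ℕ) : Prop :=
  (∀ i j : ℕ, i + j = m → p.coeff i = p.coeff j) ∧ ∀ i : ℕ, m < i → p.coeff i = 0

/-- `p` is unimodal: coefficients weakly increase up to some index and then weakly decrease. -/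
def IsUnimodal (p : Polynomial ℝ) : Prop :=
  ∃ t : ℕ, (∀ i j : ℕ, i ≤ j → j ≤ t → p.coeff i ≤ p.coeff j) ∧
    (∀ i j : ℕ, t ≤ i → i ≤ j → p.coeff j ≤ p.coeff i)

/-- Auxiliary predicate: nonneg, symmetric of darga `M`, vanishing above `M`,
and increasing up to `M/2`. -/
def SU (r : Polynomial ℝ) (M : ℕ) : Prop :=
  (∀ i, 0 ≤ r.coeff i) ∧ (∀ i j, i + j = M → r.coeff i = r.coeff j) ∧
  (∀ i, M < i → r.coeff i = 0) ∧ ∀ i j, i ≤ j → 2 * j ≤ M → r.coeff i ≤ r.coeff j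

noncomputable def Sgeom (d : ℕ) : Polynomial ℝ := ∑ i ∈ range (d + 1), X ^ i

lemma Sgeom_coeff (d t : ℕ) : (Sgeom d).coeff t = if t ≤ d then 1 else 0 := by
  rw [Sgeom, finset_sum_coeff]
  simp only [coeff_X_pow]
  rw [Finset.sum_ite_eq (range (d + 1)) t (fun _ => (1 : ℝ))]
  simp [Nat.lt_succ_iff]

lemma mulS_coeff (r : Polynomial ℝ) (d n : ℕ) :
    (r * Sgeom d).coeff n = ∑ i ∈ range (d + 1), if i ≤ n then r.coeff (n - i) else 0 := by
  rw [Sgeom, Finset.mul_sum, finset_sum_coeff]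
  exact Finset.sum_congr rfl fun i _ => coeff_mul_X_pow' r i n

lemma chain_mono {c : ℕ → ℝ} {K : ℕ} (h : ∀ n, 2 * (n + 1) ≤ K → c n ≤ c (n + 1)) :
    ∀ j i, i ≤ j → 2 * j ≤ K → c i ≤ c j := by
  intro j
  induction j with
  | zero =>
    intro i hi _
    have h0 : i = 0 := by omega
    exact le_of_eq (by rw [h0])
  | succ j ih =>
    intro i hi hK
    by_cases hij : i = j + 1
    · rw [hij]
    · exact (ih i (by omega) (by omega)).trans (h j hK)

lemma SU_window {r : Polynomial ℝ} {M : ℕ} (h : SU r M) (d : ℕ) :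
    SU (r * Sgeom d) (M + d) := by
  obtain ⟨h0, hs, hv, hi⟩ := h
  refine ⟨?_, ?_, ?_, ?_⟩
  · intro n
    rw [mulS_coeff]
    apply Finset.sum_nonneg
    intro i _
    split
    · exact h0 _
    · exact le_rfl
  · intro n n' hnn'
    rw [mulS_coeff, mulS_coeff, ← Finset.sum_range_reflect]
    refine Finset.sum_congr rfl fun i hi' => ?_
    simp only [Finset.mem_range, Nat.lt_succ_iff] at hi'
    have : d + 1 - 1 - i = d - i := by omega
    rw [this]
    split_ifs with h1 h2 h3
    · exact hs _ _ (by omega)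
    · exact hv _ (by omega)
    · exact (hv _ (by omega)).symm
    · rfl
  · intro n hn
    rw [mulS_coeff]
    apply Finset.sum_eq_zero
    intro i hi'
    simp only [Finset.mem_range, Nat.lt_succ_iff] at hi'
    split_ifs with h1
    · exact hv _ (by omega)
    · rfl
  · have step : ∀ n, 2 * (n + 1) ≤ M + d →
        (r * Sgeom d).coeff n ≤ (r * Sgeom d).coeff (n + 1) := by
      intro n hn
      rw [mulS_coeff, mulS_coeff, Finset.sum_range_succ, Finset.sum_range_succ']
      apply add_le_add
      · apply le_of_eq
        refine Finset.sum_congr rfl fun i _ => ?_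
        simp [Nat.succ_sub_succ, Nat.succ_le_succ_iff]
      · simp only [Nat.zero_le, if_true, Nat.sub_zero]
        split_ifs with hdn
        · by_cases h2 : 2 * (n + 1) ≤ M
          · exact hi _ _ (by omega) h2
          · rw [hs (n + 1) (M - (n + 1)) (by omega)]
            exact hi _ _ (by omega) (by omega)
        · exact h0 _
    intro i j hij hK
    exact chain_mono step j i hij hK

lemma SU_shift {r : Polynomial ℝ} {M : ℕ} (h : SU r M) (b : ℕ) :
    SU (r * X ^ b) (M + 2 * b) := by
  obtain ⟨h0, hs, hv, hi⟩ := h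
  have hc : ∀ n, (r * X ^ b).coeff n = if b ≤ n then r.coeff (n - b) else 0 :=
    fun n => coeff_mul_X_pow' r b n
  refine ⟨?_, ?_, ?_, ?_⟩
  · intro n; rw [hc]; split
    · exact h0 _
    · exact le_rfl
  · intro i j hij
    rw [hc, hc]
    split_ifs with h1 h2 h3
    · exact hs _ _ (by omega)
    · exact hv _ (by omega)
    · exact (hv _ (by omega)).symm
    · rfl
  · intro n hn
    rw [hc]
    split_ifs with h1
    · exact hv _ (by omega)
    · rfl
  · intro i j hij hK
    rw [hc, hc]
    split_ifs with h1 h2 h3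
    · exact hi _ _ (by omega) (by omega)
    · omega
    · exact h0 _
    · exact le_rfl

lemma SU_sum {s : Finset ℕ} {f : ℕ → Polynomial ℝ} {c : ℕ → ℝ} {M : ℕ}
    (hc : ∀ b ∈ s, 0 ≤ c b) (hf : ∀ b ∈ s, SU (f b) M) :
    SU (∑ b ∈ s, Polynomial.C (c b) * f b) M := by
  have hco : ∀ n, (∑ b ∈ s, Polynomial.C (c b) * f b).coeff n
      = ∑ b ∈ s, c b * (f b).coeff n := by
    intro n
    rw [finset_sum_coeff]
    exact Finset.sum_congr rfl fun b _ => coeff_C_mul _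
  refine ⟨?_, ?_, ?_, ?_⟩
  · intro n
    rw [hco]
    exact Finset.sum_nonneg fun b hb => mul_nonneg (hc b hb) ((hf b hb).1 _)
  · intro i j hij
    rw [hco, hco]
    exact Finset.sum_congr rfl fun b hb => by rw [(hf b hb).2.1 i j hij]
  · intro n hn
    rw [hco]
    exact Finset.sum_eq_zero fun b hb => by rw [(hf b hb).2.2.1 n hn, mul_zero]
  · intro i j hij hK
    rw [hco, hco]
    exact Finset.sum_le_sum fun b hb =>
      mul_le_mul_of_nonneg_left ((hf b hb).2.2.2 i j hij hK) (hc b hb)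

noncomputable def eAux (q : Polynomial ℝ) : ℕ → ℝ :=
  fun b => if b = 0 then 0 else q.coeff (b - 1)

lemma decomp {q : Polynomial ℝ} {m' : ℕ} (hq : SU q m') :
    q = ∑ b ∈ range (m' / 2 + 1),
      Polynomial.C (eAux q (b + 1) - eAux q b) * (Sgeom (m' - 2 * b) * X ^ b) := by
  obtain ⟨h0, hs, hv, hi⟩ := hq
  apply Polynomial.ext
  intro k
  rw [finset_sum_coeff]
  have hterm : ∀ b ∈ range (m' / 2 + 1),
      (Polynomial.C (eAux q (b + 1) - eAux q b) * (Sgeom (m' - 2 * b) * X ^ b)).coeff k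
      = (eAux q (b + 1) - eAux q b) * (if b ≤ k ∧ k ≤ m' - b then 1 else 0) := by
    intro b hb
    simp only [Finset.mem_range, Nat.lt_succ_iff] at hb
    have h2b : 2 * b ≤ m' := by omega
    rw [coeff_C_mul, coeff_mul_X_pow']
    congr 1
    split_ifs with h1 h2 h3
    · rw [Sgeom_coeff, if_pos (by omega)]
    · rw [Sgeom_coeff, if_neg (by omega)]
    · omega
    · rfl
  rw [Finset.sum_congr rfl hterm]
  by_cases hk : m' < k
  · rw [hv k hk]
    symm
    apply Finset.sum_eq_zero
    intro b hb
    simp only [Finset.mem_range, Nat.lt_succ_iff] at hb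
    rw [if_neg (by omega), mul_zero]
  · push_neg at hk
    set t := min k (m' - k) with ht
    have htm : t ≤ m' / 2 := by omega
    have hsum : ∑ b ∈ range (m' / 2 + 1),
        (eAux q (b + 1) - eAux q b) * (if b ≤ k ∧ k ≤ m' - b then 1 else 0)
        = ∑ b ∈ range (t + 1), (eAux q (b + 1) - eAux q b) := by
      rw [← Finset.sum_subset (Finset.range_subset_range.mpr (by omega) :
          range (t + 1) ⊆ range (m' / 2 + 1))]
      · refine Finset.sum_congr rfl fun b hb => ?_
        simp only [Finset.mem_range, Nat.lt_succ_iff] at hb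
        rw [if_pos (by omega), mul_one]
      · intro b hb hb'
        simp only [Finset.mem_range, Nat.lt_succ_iff] at hb hb'
        rw [if_neg (by omega), mul_zero]
    rw [hsum, Finset.sum_range_sub (eAux q)]
    have he : eAux q (t + 1) - eAux q 0 = q.coeff t := by simp [eAux]
    rw [he, ht]
    rcases le_total k (m' - k) with h' | h'
    · rw [min_eq_left h']
    · rw [min_eq_right h']
      exact hs k (m' - k) (by omega)

lemma SU_of_hyps {p : Polynomial ℝ} {m : ℕ} (h0 : ∀ i, 0 ≤ p.coeff i)
    (hsd : IsSymmOfDarga p m) (hu : IsUnimodal p) : SU p m := by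
  obtain ⟨hsym, hvan⟩ := hsd
  obtain ⟨t, hinc, hdec⟩ := hu
  refine ⟨h0, hsym, hvan, ?_⟩
  intro i j hij hK
  by_cases hjt : j ≤ t
  · exact hinc i j hij hjt
  · rw [hsym i (m - i) (by omega), hsym j (m - j) (by omega)]
    exact hdec (m - j) (m - i) (by omega) (by omega)

lemma SU_to {r : Polynomial ℝ} {M : ℕ} (h : SU r M) :
    IsSymmOfDarga r M ∧ IsUnimodal r := by
  obtain ⟨h0, hs, hv, hi⟩ := h
  refine ⟨⟨hs, hv⟩, M / 2, ?_, ?_⟩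
  · intro i j hij hj
    exact hi i j hij (by omega)
  · intro i j hti hij
    by_cases hjM : M < j
    · rw [hv j hjM]; exact h0 i
    · by_cases hije : i = j
      · rw [hije]
      · rw [hs j (M - j) (by omega)]
        have h2 : r.coeff i = r.coeff (min i (M - i)) := by
          rcases le_total i (M - i) with h' | h'
          · rw [min_eq_left h']
          · rw [min_eq_right h']
            exact hs i (M - i) (by omega)
        rw [h2]
        exact hi (M - j) (min i (M - i)) (by omega) (by omega)

theorem mul_symm_unimodal (p q : Polynomial ℝ) (m m' : ℕ)
    (hp0 : ∀ i, 0 ≤ p.coeff i) (hq0 : ∀ i, 0 ≤ q.coeff i)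
    (hp : IsSymmOfDarga p m) (hp' : IsUnimodal p)
    (hq : IsSymmOfDarga q m') (hq' : IsUnimodal q) :
    IsSymmOfDarga (p * q) (m + m') ∧ IsUnimodal (p * q) := by
  have hsp : SU p m := SU_of_hyps hp0 hp hp'
  have hsq : SU q m' := SU_of_hyps hq0 hq hq'
  have hpq : p * q = ∑ b ∈ range (m' / 2 + 1),
      Polynomial.C (eAux q (b + 1) - eAux q b) * ((p * Sgeom (m' - 2 * b)) * X ^ b) := by
    conv_lhs => rw [decomp hsq]
    rw [Finset.mul_sum]
    exact Finset.sum_congr rfl fun b _ => by ring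
  rw [hpq]
  apply SU_to
  apply SU_sum
  · intro b hb
    simp only [Finset.mem_range, Nat.lt_succ_iff] at hb
    have he1 : eAux q (b + 1) = q.coeff b := by simp [eAux]
    rw [he1]
    by_cases hb0 : b = 0
    · rw [hb0]
      have he0 : eAux q 0 = 0 := by simp [eAux]
      rw [he0, sub_zero]
      exact hsq.1 0
    · have heb : eAux q b = q.coeff (b - 1) := by simp [eAux, hb0]
      rw [heb]
      have := hsq.2.2.2 (b - 1) b (by omega) (by omega)
      linarith
  · intro b hb
    simp only [Finset.mem_range, Nat.lt_succ_iff] at hb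
    have h2b : 2 * b ≤ m' := by omega
    have := SU_shift (SU_window hsp (m' - 2 * b)) b
    have heq : m + (m' - 2 * b) + 2 * b = m + m' := by omega
    rwa [heq] at this
end

section
/- A polynomial with nonnegative coefficients is symmetric and unimodal of darga m if and only if it can be written as a finite sum of polynomials of the form c(q^r + q^{r+1} + ... + q^{m-r}) with c > 0 and 0 ≤ r ≤ m/2. -/
/-!
Write `[r, s]` for `q^r + ⋯ + q^s`. Every `[r, m - r]` is symmetric of darga `m` and unimodal
with peak `⌊m/2⌋`, and both properties survive nonnegative combinations, so a sum of atoms has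
them. Conversely, if `p = ∑ a_k q^k` is symmetric and unimodal of darga `m`, its coefficients
increase up to `⌊m/2⌋`, so the layer-cake decomposition
`p = ∑_{r ≤ m/2} (a_r - a_{r-1}) [r, m - r]` (with `a_{-1} = 0`) has nonnegative weights;
dropping the zero weights gives the atoms.
-/

open Polynomial

open Finset

lemma coeff_sum_Icc_X_pow {R : Type*} [Semiring R] (r s k : ℕ) :
    (∑ t ∈ Icc r s, (X : R[X]) ^ t).coeff k = if k ∈ Icc r s then 1 else 0 := by
  simp only [finsetSum_coeff, coeff_X_pow, sum_ite_eq]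

section Atom

variable (r m : ℕ)

lemma isSymmOfDarga_sum_Icc_X_pow : IsSymmOfDarga (∑ t ∈ Icc r (m - r), X ^ t) m := by
  constructor
  · intro i j hij
    simp only [coeff_sum_Icc_X_pow, mem_Icc]
    congr 1
    apply propext
    omega
  · intro i hi
    simp only [coeff_sum_Icc_X_pow, mem_Icc]
    exact if_neg (by omega)

variable {r m}

lemma coeff_sum_Icc_X_pow_le_of_le_half {i j : ℕ} (hij : i ≤ j) (hj : j ≤ m / 2) :
    (∑ t ∈ Icc r (m - r), (X : ℝ[X]) ^ t).coeff i ≤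
      (∑ t ∈ Icc r (m - r), X ^ t).coeff j := by
  simp only [coeff_sum_Icc_X_pow, mem_Icc]
  split_ifs <;> first | (exfalso; omega) | norm_num

lemma coeff_sum_Icc_X_pow_le_of_half_le {i j : ℕ} (hi : m / 2 ≤ i) (hij : i ≤ j) :
    (∑ t ∈ Icc r (m - r), (X : ℝ[X]) ^ t).coeff j ≤
      (∑ t ∈ Icc r (m - r), X ^ t).coeff i := by
  simp only [coeff_sum_Icc_X_pow, mem_Icc]
  split_ifs <;> first | (exfalso; omega) | norm_num

end Atom

section NonnegCombination

variable {ι : Type*} (s : Finset ι) {c : ι → ℝ} {f : ι → ℝ[X]}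

lemma IsSymmOfDarga.sum_C_mul {m : ℕ} (hf : ∀ a ∈ s, IsSymmOfDarga (f a) m) :
    IsSymmOfDarga (∑ a ∈ s, C (c a) * f a) m := by
  simp only [IsSymmOfDarga, finsetSum_coeff, coeff_C_mul]
  constructor
  · intro i j hij
    exact sum_congr rfl fun a ha => by rw [(hf a ha).1 i j hij]
  · intro i hi
    exact sum_eq_zero fun a ha => by rw [(hf a ha).2 i hi, mul_zero]

lemma coeff_sum_C_mul_le {i j : ℕ} (hc : ∀ a ∈ s, 0 ≤ c a)
    (hf : ∀ a ∈ s, (f a).coeff i ≤ (f a).coeff j) :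
    (∑ a ∈ s, C (c a) * f a).coeff i ≤ (∑ a ∈ s, C (c a) * f a).coeff j := by
  simp only [finsetSum_coeff, coeff_C_mul]
  exact sum_le_sum fun a ha => mul_le_mul_of_nonneg_left (hf a ha) (hc a ha)

lemma exists_fin_pos_of_sum_C_mul (hc : ∀ a ∈ s, 0 ≤ c a) :
    ∃ (N : ℕ) (c' : Fin N → ℝ) (e : Fin N → ι),
      (∀ b, 0 < c' b) ∧ (∀ b, e b ∈ s) ∧
        ∑ a ∈ s, C (c a) * f a = ∑ b, C (c' b) * f (e b) := by
  classical
  set s' := s.filter (fun a => 0 < c a)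
  have hdrop : ∑ a ∈ s, C (c a) * f a = ∑ a ∈ s', C (c a) * f a := by
    refine (sum_filter_of_ne fun a ha hne => (hc a ha).lt_of_ne ?_).symm
    rintro hzero
    simp [← hzero] at hne
  refine ⟨s'.card, fun b => c (s'.equivFin.symm b), fun b => s'.equivFin.symm b,
    fun b => (mem_filter.mp (s'.equivFin.symm b).2).2,
    fun b => (mem_filter.mp (s'.equivFin.symm b).2).1, ?_⟩
  rw [hdrop, ← sum_coe_sort s']
  exact (Equiv.sum_comp s'.equivFin.symm fun a => C (c a) * f a).symm

end NonnegCombination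

/-- `(1 - X) * p` has the successive differences of the coefficients of `p` as coefficients. -/
lemma sum_range_coeff_sub_X_mul {R : Type*} [Ring R] (p : R[X]) (k : ℕ) :
    ∑ r ∈ range (k + 1), (p - X * p).coeff r = p.coeff k := by
  induction k with
  | zero => simp
  | succ k ih => rw [sum_range_succ, ih, coeff_sub, coeff_X_mul, add_sub_cancel]

lemma coeff_sub_X_mul_nonneg {p : ℝ[X]} {n r : ℕ}
    (hmono : MonotoneOn (fun i => p.coeff i) (Set.Iic n)) (h0 : 0 ≤ p.coeff 0) (hr : r ≤ n) :
    0 ≤ (p - X * p).coeff r := by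
  rcases r with _ | r
  · simpa using h0
  · rw [coeff_sub, coeff_X_mul, sub_nonneg]
    exact hmono (Set.mem_Iic.mpr (by omega)) (Set.mem_Iic.mpr hr) (Nat.le_succ r)

namespace IsSymmOfDarga

variable {p : ℝ[X]} {m : ℕ}

lemma coeff_eq_coeff_min (hp : IsSymmOfDarga p m) {k : ℕ} (hk : k ≤ m) :
    p.coeff k = p.coeff (min k (m - k)) := by
  rcases le_total k (m - k) with h | h
  · rw [min_eq_left h]
  · rw [min_eq_right h]
    exact hp.1 k (m - k) (by omega)

lemma monotoneOn_coeff (hp : IsSymmOfDarga p m) (hu : IsUnimodal p) :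
    MonotoneOn (fun i => p.coeff i) (Set.Iic (m / 2)) := by
  obtain ⟨t, hinc, hdec⟩ := hu
  intro i hi j hj hij
  simp only [Set.mem_Iic] at hi hj
  rcases le_or_gt j t with hjt | htj
  · exact hinc i j hij hjt
  · calc p.coeff i = p.coeff (m - i) := hp.1 i (m - i) (by omega)
      _ ≤ p.coeff j := hdec j (m - i) htj.le (by omega)

lemma eq_sum_C_mul (hp : IsSymmOfDarga p m) :
    p = ∑ r ∈ range (m / 2 + 1), C ((p - X * p).coeff r) * ∑ t ∈ Icc r (m - r), X ^ t := by
  ext k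
  rw [finsetSum_coeff]
  simp only [coeff_C_mul, coeff_sum_Icc_X_pow, mem_Icc, mul_ite, mul_one, mul_zero]
  by_cases hk : k ≤ m
  · rw [← sum_filter, hp.coeff_eq_coeff_min hk, ← sum_range_coeff_sub_X_mul]
    congr 1
    ext r
    simp only [mem_filter, mem_range]
    omega
  · rw [hp.2 k (by omega)]
    exact (sum_eq_zero fun r hr => if_neg (by have := mem_range.mp hr; omega)).symm

end IsSymmOfDarga

/-- A nonnegative polynomial is symmetric and unimodal of darga `m` iff it is a finite sum of
"atoms" `c • (q^r + q^(r+1) + ⋯ + q^(m-r))` with `c > 0` and `0 ≤ r ≤ m/2`. -/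
theorem symm_unimodal_iff_sum_of_atoms (p : Polynomial ℝ) (m : ℕ)
    (hp0 : ∀ i, 0 ≤ p.coeff i) :
    (IsSymmOfDarga p m ∧ IsUnimodal p) ↔
      ∃ (N : ℕ) (c : Fin N → ℝ) (r : Fin N → ℕ),
        (∀ a, 0 < c a) ∧ (∀ a, 2 * r a ≤ m) ∧
        p = ∑ a, Polynomial.C (c a) * ∑ t ∈ Finset.Icc (r a) (m - r a), Polynomial.X ^ t := by
  constructor
  · rintro ⟨hs, hu⟩
    have hweights : ∀ r ∈ range (m / 2 + 1), 0 ≤ (p - X * p).coeff r := fun r hr =>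
      coeff_sub_X_mul_nonneg (hs.monotoneOn_coeff hu) (hp0 0)
        (Nat.lt_succ_iff.mp (mem_range.mp hr))
    obtain ⟨N, c, r, hc, hr, hsum⟩ := exists_fin_pos_of_sum_C_mul (range (m / 2 + 1))
      (f := fun r => ∑ t ∈ Icc r (m - r), (X : ℝ[X]) ^ t) hweights
    refine ⟨N, c, r, hc, fun a => ?_, hs.eq_sum_C_mul.trans hsum⟩
    have := mem_range.mp (hr a)
    omega
  · rintro ⟨N, c, r, hc, -, rfl⟩
    have hc' : ∀ a ∈ univ, 0 ≤ c a := fun a _ => (hc a).le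
    refine ⟨IsSymmOfDarga.sum_C_mul _ fun a _ => isSymmOfDarga_sum_Icc_X_pow _ _,
      m / 2, fun i j hij hj => ?_, fun i j hi hij => ?_⟩
    · exact coeff_sum_C_mul_le _ hc' fun a _ => coeff_sum_Icc_X_pow_le_of_le_half hij hj
    · exact coeff_sum_C_mul_le _ hc' fun a _ => coeff_sum_Icc_X_pow_le_of_half_le hi hij
end

section
/- A polynomial h(x) with symmetric coefficients of darga m that can be written as a sum over k from 0 to floor(m/2) of γ_k · x^k · (1+x)^{m-2k} with all γ_k ≥ 0 is symmetric and unimodal of darga m. -/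
open Polynomial

/-! Each `x^k (1+x)^(m-2k)` is symmetric of darga `m` with nonnegative coefficients that increase
up to the centre `m/2`. These three properties (unlike unimodality alone) are preserved by
nonnegative linear combinations, and together they force unimodality with peak at the centre. -/

theorem Nat.choose_le_choose_of_two_mul_le {n i j : ℕ} (hij : i ≤ j) (hj : 2 * j ≤ n + 1) :
    n.choose i ≤ n.choose j := by
  induction j, hij using Nat.le_induction with
  | base => rfl
  | succ k _ ih =>
    refine (ih (by omega)).trans ?_
    rcases Nat.lt_or_ge k (n / 2) with hk | hk
    · exact Nat.choose_le_succ_of_lt_half_left hk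
    · obtain rfl : n = 2 * k + 1 := by omega
      exact (Nat.choose_symm_half k).ge

structure IsSymmUnimodalOfDarga (p : ℝ[X]) (m : ℕ) : Prop where
  symm : IsSymmOfDarga p m
  coeff_nonneg : ∀ i, 0 ≤ p.coeff i
  coeff_mono : ∀ i j, i ≤ j → 2 * j ≤ m + 1 → p.coeff i ≤ p.coeff j

namespace IsSymmUnimodalOfDarga

theorem isUnimodal {p : ℝ[X]} {m : ℕ} (hp : IsSymmUnimodalOfDarga p m) : IsUnimodal p := by
  obtain ⟨⟨hsymm, hzero⟩, hnonneg, hmono⟩ := hp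
  refine ⟨(m + 1) / 2, fun i j hij hj => hmono i j hij (by omega), fun i j hi hij => ?_⟩
  rcases Nat.lt_or_ge m j with hj | hj
  · exact (hzero j hj).symm ▸ hnonneg i
  · rw [hsymm j (m - j) (by omega), hsymm i (m - i) (by omega)]
    exact hmono _ _ (by omega) (by omega)

theorem one_add_X_pow (n : ℕ) : IsSymmUnimodalOfDarga ((1 + X) ^ n) n where
  symm := by
    simp only [IsSymmOfDarga, coeff_one_add_X_pow, Nat.cast_inj, Nat.cast_eq_zero]
    exact ⟨fun i j hij => Nat.choose_symm_of_eq_add hij.symm,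
      fun i hi => Nat.choose_eq_zero_of_lt hi⟩
  coeff_nonneg i := by simp only [coeff_one_add_X_pow]; positivity
  coeff_mono i j hij hj := by
    simp only [coeff_one_add_X_pow, Nat.cast_le]
    exact Nat.choose_le_choose_of_two_mul_le hij hj

theorem X_pow_mul {p : ℝ[X]} {n : ℕ} (hp : IsSymmUnimodalOfDarga p n) (k : ℕ) :
    IsSymmUnimodalOfDarga (X ^ k * p) (n + 2 * k) := by
  obtain ⟨⟨hsymm, hzero⟩, hnonneg, hmono⟩ := hp
  refine ⟨⟨fun i j hij => ?_, fun i hi => ?_⟩, fun i => ?_, fun i j hij hj => ?_⟩ <;>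
    simp only [coeff_X_pow_mul']
  · by_cases hi : k ≤ i <;> by_cases hj : k ≤ j <;> simp only [hi, hj, if_true, if_false]
    · exact hsymm _ _ (by omega)
    · exact hzero _ (by omega)
    · exact (hzero _ (by omega)).symm
  · rw [if_pos (by omega), hzero _ (by omega)]
  · split_ifs
    exacts [hnonneg _, le_rfl]
  · by_cases hi : k ≤ i
    · rw [if_pos hi, if_pos (hi.trans hij)]
      exact hmono _ _ (by omega) (by omega)
    · rw [if_neg hi]
      split_ifs
      exacts [hnonneg _, le_rfl]

theorem sum_C_mul {ι : Type*} {s : Finset ι} {c : ι → ℝ} {p : ι → ℝ[X]} {m : ℕ}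
    (hc : ∀ k ∈ s, 0 ≤ c k) (hp : ∀ k ∈ s, IsSymmUnimodalOfDarga (p k) m) :
    IsSymmUnimodalOfDarga (∑ k ∈ s, C (c k) * p k) m := by
  refine ⟨⟨fun i j hij => ?_, fun i hi => ?_⟩, fun i => ?_, fun i j hij hj => ?_⟩ <;>
    simp only [finsetSum_coeff, coeff_C_mul]
  · exact Finset.sum_congr rfl fun k hk => by rw [(hp k hk).symm.1 i j hij]
  · exact Finset.sum_eq_zero fun k hk => by rw [(hp k hk).symm.2 i hi, mul_zero]
  · exact Finset.sum_nonneg fun k hk => mul_nonneg (hc k hk) ((hp k hk).coeff_nonneg i)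
  · exact Finset.sum_le_sum fun k hk =>
      mul_le_mul_of_nonneg_left ((hp k hk).coeff_mono i j hij hj) (hc k hk)

end IsSymmUnimodalOfDarga

/-- A γ-nonnegative polynomial `h = Σ_{k=0}^{⌊m/2⌋} γ_k x^k (1+x)^{m-2k}` with all `γ_k ≥ 0`
is symmetric and unimodal of darga `m`. -/
theorem gamma_nonneg_symm_unimodal (m : ℕ) (γ : ℕ → ℝ) (h : Polynomial ℝ)
    (hγ : ∀ k ≤ m / 2, 0 ≤ γ k)
    (hh : h = ∑ k ∈ Finset.range (m / 2 + 1),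
        Polynomial.C (γ k) * Polynomial.X ^ k * (1 + Polynomial.X) ^ (m - 2 * k)) :
    IsSymmOfDarga h m ∧ IsUnimodal h := by
  have hbasis : ∀ k ≤ m / 2, IsSymmUnimodalOfDarga (X ^ k * (1 + X) ^ (m - 2 * k)) m :=
    fun k hk => by
      simpa only [Nat.sub_add_cancel (by omega : 2 * k ≤ m)] using
        (IsSymmUnimodalOfDarga.one_add_X_pow (m - 2 * k)).X_pow_mul k
  have hmem : ∀ k ∈ Finset.range (m / 2 + 1), k ≤ m / 2 := fun k hk =>
    Nat.lt_succ_iff.mp (Finset.mem_range.mp hk)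
  have hsum : IsSymmUnimodalOfDarga h m := by
    simp_rw [hh, mul_assoc]
    exact .sum_C_mul (fun k hk => hγ k (hmem k hk)) fun k hk => hbasis k (hmem k hk)
  exact ⟨hsum.symm, hsum.isUnimodal⟩
end

section
/- In the O'Hara–Zeilberger recurrence for G(n,k), if partitions of k are restricted to use only parts of size at most p, and p < 2k/(n+2), then the resulting restricted sum G'(n,k) equals 0. -/
open Polynomial Finset

/-! The last factor of every summand is `G'(n + 2 - 2ℓ, ·)`, where `ℓ = Σ dᵢ` is the number of
parts of the partition. Parts of size at most `p` force `k ≤ p ℓ`, so `p (n + 2) < 2k` gives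
`n + 2 < 2ℓ`: the last factor, hence every summand, vanishes. -/

/-- The summand of the O'Hara–Zeilberger recurrence for `G(n,k)` corresponding to a partition
of `k` recorded by its multiplicity function `d` (`d i` = number of parts of size `i`):
`q^(k(Σ d_i) - k - Σ_{j<i}(i-j)d_i d_j) ∏_{i=0}^{k-1} G((k-i)n - 2i + 2Σ_{j<i}(i-j)d_{k-j}, d_{k-i})`. -/
noncomputable def contrib (Gr : ℤ → ℕ → Polynomial ℚ) (n k : ℕ) (d : ℕ → ℕ) : Polynomial ℚ :=
  Polynomial.X ^ (k * (∑ i ∈ Finset.Icc 1 k, d i) - k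
      - ∑ p ∈ (Finset.Icc 1 k ×ˢ Finset.Icc 1 k).filter (fun p => p.2 < p.1),
          (p.1 - p.2) * d p.1 * d p.2)
    * ∏ i ∈ Finset.range k,
        Gr (((k : ℤ) - (i : ℤ)) * (n : ℤ) - 2 * (i : ℤ)
              + 2 * ∑ j ∈ Finset.range i, ((i : ℤ) - (j : ℤ)) * (d (k - j) : ℤ))
          (d (k - i))

theorem sum_mul_le_mul_sum_of_eq_zero_of_lt {s : Finset ℕ} {d : ℕ → ℕ} {p : ℕ}
    (h : ∀ i ∈ s, p < i → d i = 0) : ∑ i ∈ s, i * d i ≤ p * ∑ i ∈ s, d i := by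
  rw [Finset.mul_sum]
  refine Finset.sum_le_sum fun i hi => ?_
  rcases le_or_gt i p with hip | hpi
  · exact Nat.mul_le_mul_right _ hip
  · simp [h i hi hpi]

theorem sum_range_sub_mul_eq_sum_Icc (f : ℕ → ℤ) (m : ℕ) :
    ∑ j ∈ range m, ((m : ℤ) - j) * f (m + 1 - j) = ∑ i ∈ Icc 1 (m + 1), ((i : ℤ) - 1) * f i := by
  have hext : ∑ j ∈ range m, ((m : ℤ) - j) * f (m + 1 - j)
      = ∑ j ∈ range (m + 1), ((m : ℤ) - j) * f (m + 1 - j) := by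
    simp [Finset.sum_range_succ]
  rw [hext]
  refine Finset.sum_nbij' (fun j => m + 1 - j) (fun i => m + 1 - i) ?_ ?_ ?_ ?_ ?_
  · intro j hj; simp only [mem_range, mem_Icc] at hj ⊢; omega
  · intro i hi; simp only [mem_range, mem_Icc] at hi ⊢; omega
  · intro j hj; simp only [mem_range] at hj; omega
  · intro i hi; simp only [mem_Icc] at hi; omega
  · intro j hj
    rw [Nat.cast_sub (mem_range.1 hj).le]
    push_cast
    ring

theorem contrib_last_argument_eq (n m : ℕ) (d : ℕ → ℕ)
    (hsum : ∑ i ∈ Icc 1 (m + 1), i * d i = m + 1) :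
    (((m + 1 : ℕ) : ℤ) - (m : ℤ)) * (n : ℤ) - 2 * (m : ℤ)
        + 2 * ∑ j ∈ range m, ((m : ℤ) - (j : ℤ)) * (d (m + 1 - j) : ℤ)
      = n + 2 - 2 * ∑ i ∈ Icc 1 (m + 1), (d i : ℤ) := by
  have hsumZ : ∑ i ∈ Icc 1 (m + 1), (i : ℤ) * d i = m + 1 := by exact_mod_cast hsum
  rw [sum_range_sub_mul_eq_sum_Icc (fun i => (d i : ℤ))]
  simp only [sub_mul, one_mul, Finset.sum_sub_distrib, hsumZ]
  push_cast
  ring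

theorem contrib_eq_zero_of_lt (G' : ℤ → ℕ → Polynomial ℚ) (n k : ℕ) (d : ℕ → ℕ)
    (hneg : ∀ (m : ℤ) (k' : ℕ), m < 0 → G' m k' = 0) (hk : 0 < k)
    (hsum : ∑ i ∈ Icc 1 k, i * d i = k) (hlt : n + 2 < 2 * ∑ i ∈ Icc 1 k, d i) :
    contrib G' n k d = 0 := by
  obtain ⟨m, rfl⟩ := Nat.exists_eq_add_one.2 hk
  unfold contrib
  refine mul_eq_zero_of_right _ (Finset.prod_eq_zero (mem_range.2 m.lt_succ_self) (hneg _ _ ?_))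
  rw [contrib_last_argument_eq n m d hsum]
  have hltZ : (n : ℤ) + 2 < 2 * ∑ i ∈ Icc 1 (m + 1), (d i : ℤ) := by exact_mod_cast hlt
  omega

/-- If in the O'Hara–Zeilberger recurrence the partitions of `k` are restricted to parts of size
at most `p` with `p < 2k/(n+2)`, then the restricted sum `G'(n,k)` is `0`. -/
theorem restricted_parts_eq_zero (G' : ℤ → ℕ → Polynomial ℚ) (n k p : ℕ)
    (hneg : ∀ (m : ℤ) (k' : ℕ), m < 0 → G' m k' = 0)
    (D : Finset (ℕ → ℕ))
    (hD : ∀ d : ℕ → ℕ, d ∈ D ↔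
      ((∑ i ∈ Finset.Icc 1 k, i * d i = k) ∧ ∀ i : ℕ, (i = 0 ∨ p < i) → d i = 0))
    (hrec : G' (n : ℤ) k = ∑ d ∈ D, contrib G' n k d)
    (hp : p * (n + 2) < 2 * k) :
    G' (n : ℤ) k = 0 := by
  rw [hrec]
  refine Finset.sum_eq_zero fun d hd => ?_
  obtain ⟨hsum, hbig⟩ := (hD d).1 hd
  have hkp : k ≤ p * ∑ i ∈ Icc 1 k, d i :=
    hsum.ge.trans <| sum_mul_le_mul_sum_of_eq_zero_of_lt fun i _ hi => hbig i (Or.inr hi)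
  have hlt : n + 2 < 2 * ∑ i ∈ Icc 1 k, d i :=
    Nat.lt_of_mul_lt_mul_left (a := p) (by linarith)
  exact contrib_eq_zero_of_lt G' n k d hneg (by omega) hsum hlt
end
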